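/- arXiv:math/0306125 — 2 statements merged into one kernel-verified Lean document; each statement's English description precedes it below -/
import Mathlib

section
/- Let D = ABC be a Dyck word, where B is a Dyck word and the words A and C have the same length. Then Ψ(ABC) = Ψ(AC)·Ψ(B) (concatenation of words). In particular, Ψ(uBd) = ud·Ψ(B) for any Dyck word B. -/
attribute [local instance] Classical.propDecidable

namespace DyckBij

/-- A word over `Bool` (`true` = up-step `u`, `false` = down-step `d`) is a Dyck word:
equally many `u`'s and `d`'s, and every prefix has at least as many `u`'s as `d`'s. -/
def IsDyck (w : List Bool) : Prop :=
  w.count false = w.count true ∧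
    ∀ p : List Bool, p <+: w → p.count false ≤ p.count true

/-- `Matched w i j`: the `u` at (0-indexed) position `i` of `w` is matched (as in matched
parentheses) with the `d` at position `j`, i.e. `w = A u B d C` with `B` a Dyck word,
`|A| = i` and `j = i + |B| + 1`. -/
def Matched (w : List Bool) (i j : ℕ) : Prop :=
  ∃ A B C : List Bool, IsDyck B ∧ w = A ++ true :: (B ++ false :: C) ∧
    A.length = i ∧ j = i + B.length + 1

/-- Positions `i` and `j` form a matched pair of steps of `w`. -/
def MatchPair (w : List Bool) (i j : ℕ) : Prop :=
  Matched w i j ∨ Matched w j i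

/-- The 0-indexed reading order `σ^{(r)}` on a word of length `L`: the first `2r` positions
are read in order, and the remaining positions are read in zigzag
`2r, L-1, 2r+1, L-2, …` (0-indexed). For `r = 0` this is the zigzag order `σ`. -/
def zigR (r L p : ℕ) : ℕ :=
  if p < 2 * r then p
  else if p % 2 = 0 then p / 2 + r
  else L + r - (p + 1) / 2

/-- The bijection `Ψ_r`: the `p`-th letter of `Ψ_r(w)` is `u` iff the match of the
`σ^{(r)}_p`-th step of `w` does not occur among the previously read steps
`σ^{(r)}_0, …, σ^{(r)}_{p-1}`. -/
noncomputable def psiR (r : ℕ) (w : List Bool) : List Bool :=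
  List.ofFn fun p : Fin w.length =>
    if ∃ p' : ℕ, p' < (p : ℕ) ∧
        MatchPair w (zigR r w.length p') (zigR r w.length (p : ℕ))
    then false else true

/-- The bijection `Ψ = Ψ_0`. -/
noncomputable def psi : List Bool → List Bool := psiR 0

/-- Number of tunnels of `w` with `|A| = |C| + 2r` (midpoint at `x = n + r`),
i.e. decompositions `w = A u B d C` with `B` a Dyck word; tunnels are indexed by `|A|`. -/
noncomputable def tunEq (r : ℕ) (w : List Bool) : ℕ :=
  {i : ℕ | ∃ A B C : List Bool, IsDyck B ∧ w = A ++ true :: (B ++ false :: C) ∧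
    A.length = i ∧ A.length = C.length + 2 * r}.ncard

/-- Number of tunnels of `w` with `|A| > |C| + 2r` (midpoint in `x > n + r`). -/
noncomputable def tunGt (r : ℕ) (w : List Bool) : ℕ :=
  {i : ℕ | ∃ A B C : List Bool, IsDyck B ∧ w = A ++ true :: (B ++ false :: C) ∧
    A.length = i ∧ C.length + 2 * r < A.length}.ncard

/-- Number of tunnels of `w` with `|A| ≤ |C| + 2r` (midpoint in `x ≤ n + r`). -/
noncomputable def tunLe (r : ℕ) (w : List Bool) : ℕ :=
  {i : ℕ | ∃ A B C : List Bool, IsDyck B ∧ w = A ++ true :: (B ++ false :: C) ∧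
    A.length = i ∧ A.length ≤ C.length + 2 * r}.ncard

/-- Number of centered tunnels `ct(w)`. -/
noncomputable def ctun (w : List Bool) : ℕ := tunEq 0 w

/-- Number of right tunnels `rt(w)`. -/
noncomputable def rtun (w : List Bool) : ℕ := tunGt 0 w

/-- Number of left tunnels `lt(w)`: tunnels with `|A| < |C|`. -/
noncomputable def ltun (w : List Bool) : ℕ :=
  {i : ℕ | ∃ A B C : List Bool, IsDyck B ∧ w = A ++ true :: (B ++ false :: C) ∧
    A.length = i ∧ A.length < C.length}.ncard

/-- Number of multitunnels of `w` with `|A| = |C| + 2r` (midpoint at `x = n + r`):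
decompositions `w = A B C` with `B` a nonempty Dyck word, indexed by `(|A|, |B|)`. -/
noncomputable def mtunEq (r : ℕ) (w : List Bool) : ℕ :=
  {q : ℕ × ℕ | ∃ A B C : List Bool, IsDyck B ∧ B ≠ [] ∧ w = A ++ B ++ C ∧
    A.length = q.1 ∧ B.length = q.2 ∧ A.length = C.length + 2 * r}.ncard

/-- Number of centered multitunnels `cmt(w)`. -/
noncomputable def cmtun (w : List Bool) : ℕ := mtunEq 0 w

/-- Number of hills `h(w)`: decompositions `w = X u d Y` with `X, Y` Dyck words. -/
noncomputable def numHills (w : List Bool) : ℕ :=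
  {i : ℕ | ∃ X Y : List Bool, IsDyck X ∧ IsDyck Y ∧
    w = X ++ true :: false :: Y ∧ X.length = i}.ncard

/-- Number of hills of `w` lying in `x > 2r`, i.e. with `|X| ≥ 2r`. -/
noncomputable def numHillsAfter (r : ℕ) (w : List Bool) : ℕ :=
  {i : ℕ | ∃ X Y : List Bool, IsDyck X ∧ IsDyck Y ∧
    w = X ++ true :: false :: Y ∧ X.length = i ∧ 2 * r ≤ X.length}.ncard

/-- Number of arches (equivalently, returns) `ret(w)`: decompositions
`w = X (u B d) Y` with `X, B, Y` Dyck words. -/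
noncomputable def numArches (w : List Bool) : ℕ :=
  {i : ℕ | ∃ X B Y : List Bool, IsDyck X ∧ IsDyck B ∧ IsDyck Y ∧
    w = X ++ true :: (B ++ false :: Y) ∧ X.length = i}.ncard

/-- Number of arches of `w` lying in `x ≥ 2r`, i.e. with `|X| ≥ 2r`. -/
noncomputable def numArchesAfter (r : ℕ) (w : List Bool) : ℕ :=
  {i : ℕ | ∃ X B Y : List Bool, IsDyck X ∧ IsDyck B ∧ IsDyck Y ∧
    w = X ++ true :: (B ++ false :: Y) ∧ X.length = i ∧ 2 * r ≤ X.length}.ncard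

/-- Number of odd rises `odr(w)`: `u`-steps at odd 1-indexed positions
(even 0-indexed positions). -/
noncomputable def oddRises (w : List Bool) : ℕ :=
  {p : ℕ | p < w.length ∧ p % 2 = 0 ∧ w.getD p false = true}.ncard

/-- Number of even rises `er(w)`: `u`-steps at even 1-indexed positions
(odd 0-indexed positions). -/
noncomputable def evenRises (w : List Bool) : ℕ :=
  {p : ℕ | p < w.length ∧ p % 2 = 1 ∧ w.getD p false = true}.ncard

/-- Number of odd rises of `w` at 1-indexed positions `> 2r`. -/
noncomputable def oddRisesAfter (r : ℕ) (w : List Bool) : ℕ :=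
  {p : ℕ | p < w.length ∧ p % 2 = 0 ∧ 2 * r ≤ p ∧ w.getD p false = true}.ncard

/-- Number of even rises of `w` at 1-indexed positions `> 2r`. -/
noncomputable def evenRisesAfter (r : ℕ) (w : List Bool) : ℕ :=
  {p : ℕ | p < w.length ∧ p % 2 = 1 ∧ 2 * r ≤ p ∧ w.getD p false = true}.ncard

/-- Number of `u`-steps of `w` at 1-indexed positions `≤ 2r`. -/
noncomputable def upstepsBefore (r : ℕ) (w : List Bool) : ℕ :=
  {p : ℕ | p < w.length ∧ p < 2 * r ∧ w.getD p false = true}.ncard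

/-- Number of peaks of `w`: occurrences of the factor `u d`. -/
noncomputable def numPeaks (w : List Bool) : ℕ :=
  {i : ℕ | i + 2 ≤ w.length ∧ w.getD i false = true ∧ w.getD (i + 1) true = false}.ncard

/-- Number of occurrences in `w` of a factor of length 3 beginning with `u`
and ending with `d` (occurrences of `u⋆d`). -/
noncomputable def numUStarD (w : List Bool) : ℕ :=
  {i : ℕ | i + 3 ≤ w.length ∧ w.getD i false = true ∧ w.getD (i + 2) true = false}.ncard

/-- `ih(w)`: 1 if `w` begins with the factor `u d`, else 0. -/
noncomputable def initHill (w : List Bool) : ℕ :=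
  if w.take 2 = [true, false] then 1 else 0

/-- `fh(w)`: 1 if `w = X u d` with `X` a Dyck word, else 0. -/
noncomputable def finHill (w : List Bool) : ℕ :=
  if ∃ X : List Bool, IsDyck X ∧ w = X ++ [true, false] then 1 else 0

/-- `π` avoids the pattern 321. -/
def Avoids321 {n : ℕ} (π : Equiv.Perm (Fin n)) : Prop :=
  ¬ ∃ i j k : Fin n, i < j ∧ j < k ∧ π k < π j ∧ π j < π i

/-- `π` avoids the pattern 132. -/
def Avoids132 {n : ℕ} (π : Equiv.Perm (Fin n)) : Prop :=
  ¬ ∃ i j k : Fin n, i < j ∧ j < k ∧ π i < π k ∧ π k < π j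

/-- Number of fixed points of `π`. -/
noncomputable def fixedPts {n : ℕ} (π : Equiv.Perm (Fin n)) : ℕ :=
  {i : Fin n | π i = i}.ncard

/-- Number of excedances of `π`. -/
noncomputable def excedances {n : ℕ} (π : Equiv.Perm (Fin n)) : ℕ :=
  {i : Fin n | i < π i}.ncard

/-- Number of descents of `π`. -/
noncomputable def descents {n : ℕ} (π : Equiv.Perm (Fin n)) : ℕ :=
  {i : ℕ | ∃ (h1 : i < n) (h2 : i + 1 < n), π ⟨i + 1, h2⟩ < π ⟨i, h1⟩}.ncard

/-- `α_r(π) = #{i : π(i) = i + r}` (stated 0-indexed, equivalent to the 1-indexed version). -/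
noncomputable def alphaStat {n : ℕ} (r : ℕ) (π : Equiv.Perm (Fin n)) : ℕ :=
  {i : Fin n | (π i : ℕ) = (i : ℕ) + r}.ncard

/-- `β_r(π) = #{i : i > r, π(i) = i}` (for 1-indexed `i`; 0-indexed this is `r ≤ i`). -/
noncomputable def betaStat {n : ℕ} (r : ℕ) (π : Equiv.Perm (Fin n)) : ℕ :=
  {i : Fin n | r ≤ (i : ℕ) ∧ π i = i}.ncard

/-!
Read `A ++ B ++ C` in zigzag order. Since `|A| = |C|`, the first `2|A|` reads alternate between
`A` and `C` exactly as the zigzag reading of `A ++ C` does, and the last `|B|` reads traverse `B`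
in its own zigzag order. As `B` is a Dyck word, no step of `B` is matched outside `B`, and cutting
`B` out preserves the matching of all other steps; so the first `2|A|` letters of `Ψ(ABC)` are
those of `Ψ(AC)` and the last `|B|` are those of `Ψ(B)`.
-/

theorem _root_.List.prefix_append_iff {α : Type*} {p l₁ l₂ : List α} :
    p <+: l₁ ++ l₂ ↔ p <+: l₁ ∨ ∃ q, q <+: l₂ ∧ p = l₁ ++ q := by
  constructor
  · rintro ⟨t, h⟩
    rcases List.append_eq_append_iff.mp h with ⟨r, rfl, -⟩ | ⟨q, rfl, rfl⟩
    · exact Or.inl (List.prefix_append p r)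
    · exact Or.inr ⟨q, List.prefix_append q t, rfl⟩
  · rintro (h | ⟨q, hq, rfl⟩)
    · exact h.trans (List.prefix_append l₁ l₂)
    · exact (List.prefix_append_right_inj l₁).mpr hq

lemma IsDyck.count_true_le_of_suffix {w t : List Bool} (hw : IsDyck w) (ht : t <:+ w) :
    t.count true ≤ t.count false := by
  obtain ⟨s, rfl⟩ := ht
  have hs := hw.2 s (List.prefix_append s t)
  have hw1 := hw.1
  simp only [List.count_append] at hw1
  omega

lemma isDyck_append_append_iff {B : List Bool} (hB : IsDyck B) (X Y : List Bool) :
    IsDyck (X ++ B ++ Y) ↔ IsDyck (X ++ Y) := by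
  obtain ⟨hB1, hB2⟩ := hB
  simp only [IsDyck, List.append_assoc, List.prefix_append_iff, List.count_append, or_imp,
    forall_and, forall_exists_index, and_imp]
  constructor
  · rintro ⟨hc, hX, -, hY⟩
    refine ⟨by omega, hX, fun p q hq hp => ?_⟩
    have := hY _ _ q hq rfl rfl
    simp only [hp, List.count_append] at this ⊢
    omega
  · rintro ⟨hc, hX, hY⟩
    refine ⟨by omega, hX, fun p q hq hp => ?_, fun p r q hq hr hp => ?_⟩
    · have := hX X List.prefix_rfl
      have := hB2 q hq
      simp only [hp, List.count_append]
      omega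
    · have := hY _ q hq rfl
      simp only [hp, hr, List.count_append] at this ⊢
      omega

lemma matched_iff {w : List Bool} {i j : ℕ} :
    Matched w i j ↔
      i < j ∧ w[i]? = some true ∧ w[j]? = some false ∧ IsDyck ((w.take j).drop (i + 1)) := by
  constructor
  · rintro ⟨A, B, C, hB, rfl, rfl, rfl⟩
    have hw : A ++ true :: (B ++ false :: C) = (A ++ true :: B) ++ false :: C := by simp
    have hl : A.length + B.length + 1 = (A ++ true :: B).length := by simp; omega
    rw [hw, hl, List.take_left]
    simp [hB]
  · rintro ⟨hij, hi, hj, hD⟩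
    obtain ⟨hi', hwi⟩ := List.getElem?_eq_some_iff.mp hi
    obtain ⟨hj', hwj⟩ := List.getElem?_eq_some_iff.mp hj
    refine ⟨w.take i, (w.take j).drop (i + 1), w.drop (j + 1), hD, ?_, by simp; omega,
      by simp; omega⟩
    conv_lhs => rw [← List.take_append_drop j w, List.drop_eq_getElem_cons hj',
      ← List.take_append_drop (i + 1) (w.take j), List.take_take, Nat.min_eq_left hij,
      List.take_add_one, hi]
    simp [hwj]

/-- Position in `A ++ B ++ C` of the letter at position `x` of `A ++ C`,
where `a = |A|` and `b = |B|`. -/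
def spliceIdx (a b x : ℕ) : ℕ := if x < a then x else x + b

section Splice

variable {A B C : List Bool}

lemma getElem?_spliceIdx (x : ℕ) :
    (A ++ B ++ C)[spliceIdx A.length B.length x]? = (A ++ C)[x]? := by
  unfold spliceIdx
  split_ifs with hx
  · simp [List.getElem?_append_left, hx]
  · rw [List.append_assoc, List.getElem?_append_right (by omega),
      List.getElem?_append_right (by omega), List.getElem?_append_right (by omega)]
    congr 1
    omega

lemma spliceIdx_lt_spliceIdx {a b x y : ℕ} : spliceIdx a b x < spliceIdx a b y ↔ x < y := by
  unfold spliceIdx; split_ifs <;> omega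

lemma matched_spliceIdx (hB : IsDyck B) {x y : ℕ} :
    Matched (A ++ B ++ C) (spliceIdx A.length B.length x) (spliceIdx A.length B.length y) ↔
      Matched (A ++ C) x y := by
  rw [matched_iff, matched_iff, getElem?_spliceIdx, getElem?_spliceIdx, spliceIdx_lt_spliceIdx]
  refine and_congr_right fun hxy => and_congr_right fun _ => and_congr_right fun _ => ?_
  unfold spliceIdx
  split_ifs with hx hy hy
  · simp [List.take_append, hy.le]
  · obtain ⟨k, rfl⟩ : ∃ k, y = A.length + k := ⟨y - A.length, by omega⟩
    rw [show A.length + k + B.length = (A ++ B).length + k by simp; omega,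
      List.take_length_add_append, List.take_length_add_append, List.append_assoc,
      List.drop_append_of_le_length hx, List.drop_append_of_le_length hx, ← List.append_assoc,
      isDyck_append_append_iff hB]
  · omega
  · obtain ⟨k, rfl⟩ : ∃ k, y = A.length + k := ⟨y - A.length, by omega⟩
    obtain ⟨l, rfl⟩ : ∃ l, x = A.length + l := ⟨x - A.length, by omega⟩
    rw [show A.length + k + B.length = (A ++ B).length + k by simp; omega,
      show A.length + l + B.length + 1 = (A ++ B).length + (l + 1) by simp; omega,
      List.take_length_add_append, List.take_length_add_append, List.drop_length_add_append,
      add_assoc, List.drop_length_add_append]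

lemma getElem?_append_append_length_add {x : ℕ} (hx : x < B.length) :
    (A ++ B ++ C)[A.length + x]? = B[x]? := by
  rw [List.getElem?_append_left (by simp; omega), List.getElem?_append_right (by omega),
    Nat.add_sub_cancel_left]

lemma matched_append_append_length_add {x y : ℕ} (hy : y < B.length) :
    Matched (A ++ B ++ C) (A.length + x) (A.length + y) ↔ Matched B x y := by
  rw [matched_iff, matched_iff, Nat.add_lt_add_iff_left]
  refine and_congr_right fun hxy => ?_
  rw [getElem?_append_append_length_add (by omega), getElem?_append_append_length_add hy,
    List.append_assoc, List.take_length_add_append, List.take_append_of_le_length hy.le,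
    add_assoc, List.drop_length_add_append]

lemma not_matched_spliceIdx_length_add (hB : IsDyck B) {x y : ℕ} (hy : y < B.length) :
    ¬ Matched (A ++ B ++ C) (spliceIdx A.length B.length x) (A.length + y) := by
  rw [matched_iff]
  rintro ⟨hlt, -, hy', hD⟩
  have hx : x < A.length := by unfold spliceIdx at hlt; split_ifs at hlt <;> omega
  rw [getElem?_append_append_length_add hy] at hy'
  rw [spliceIdx, if_pos hx, List.append_assoc, List.take_length_add_append,
    List.take_append_of_le_length hy.le, List.drop_append_of_le_length hx] at hD
  -- `B.take y` is followed by a `d` in `B`, so it has more `u`'s than `d`'s; but it is a suffix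
  -- of the Dyck word `hD`, so it has at most as many.
  obtain ⟨hyB, hBy⟩ := List.getElem?_eq_some_iff.mp hy'
  have hpre := hB.2 _ ((List.take_append_getElem hyB).symm ▸ List.take_prefix (y + 1) B)
  have hsuf := hD.count_true_le_of_suffix (List.suffix_append _ (B.take y))
  simp [hBy] at hpre
  omega

lemma not_matched_length_add_spliceIdx (hB : IsDyck B) {x y : ℕ} (hy : y < B.length) :
    ¬ Matched (A ++ B ++ C) (A.length + y) (spliceIdx A.length B.length x) := by
  rw [matched_iff]
  rintro ⟨hlt, hy', -, hD⟩
  obtain ⟨l, rfl⟩ : ∃ l, x = A.length + l := by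
    unfold spliceIdx at hlt; split_ifs at hlt <;> exact ⟨x - A.length, by omega⟩
  rw [getElem?_append_append_length_add hy] at hy'
  rw [spliceIdx, if_neg (by omega),
    show A.length + l + B.length = (A ++ B).length + l by simp; omega,
    List.take_length_add_append, List.append_assoc,
    add_assoc, List.drop_length_add_append, List.drop_append_of_le_length hy] at hD
  -- dually, `B.drop (y + 1)` follows a `u` in `B` but is a prefix of the Dyck word `hD`
  obtain ⟨hyB, hBy⟩ := List.getElem?_eq_some_iff.mp hy'
  have hsuf := hB.count_true_le_of_suffix
    ((List.drop_eq_getElem_cons hyB).symm ▸ List.drop_suffix y B)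
  have hpre := hD.2 _ (List.prefix_append (B.drop (y + 1)) (C.take l))
  simp [hBy] at hsuf
  omega

lemma matchPair_spliceIdx (hB : IsDyck B) {x y : ℕ} :
    MatchPair (A ++ B ++ C) (spliceIdx A.length B.length x) (spliceIdx A.length B.length y) ↔
      MatchPair (A ++ C) x y :=
  or_congr (matched_spliceIdx hB) (matched_spliceIdx hB)

lemma matchPair_append_append_length_add {x y : ℕ} (hx : x < B.length)
    (hy : y < B.length) :
    MatchPair (A ++ B ++ C) (A.length + x) (A.length + y) ↔ MatchPair B x y :=
  or_congr (matched_append_append_length_add hy) (matched_append_append_length_add hx)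

lemma not_matchPair_spliceIdx_length_add (hB : IsDyck B) {x y : ℕ} (hy : y < B.length) :
    ¬ MatchPair (A ++ B ++ C) (spliceIdx A.length B.length x) (A.length + y) := by
  rintro (h | h)
  exacts [not_matched_spliceIdx_length_add hB hy h, not_matched_length_add_spliceIdx hB hy h]

end Splice

lemma zigR_zero (L q : ℕ) : zigR 0 L q = if q % 2 = 0 then q / 2 else L - (q + 1) / 2 := by
  simp [zigR]

lemma zigR_zero_lt {L q : ℕ} (hq : q < L) : zigR 0 L q < L := by
  rw [zigR_zero]; split_ifs <;> omega

lemma zigR_zero_two_mul_add_of_lt {a b q : ℕ} (hq : q < 2 * a) :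
    zigR 0 (2 * a + b) q = spliceIdx a b (zigR 0 (2 * a) q) := by
  rw [zigR_zero, zigR_zero, spliceIdx]; split_ifs <;> omega

lemma zigR_zero_two_mul_add_add {a b q : ℕ} (hq : q < b) :
    zigR 0 (2 * a + b) (2 * a + q) = a + zigR 0 b q := by
  rw [zigR_zero, zigR_zero]; split_ifs <;> omega

lemma length_psi (w : List Bool) : (psi w).length = w.length := by
  simp [psi, psiR]

lemma getElem_psi (w : List Bool) {p : ℕ} (hp : p < (psi w).length) :
    (psi w)[p] = if ∃ p' < p, MatchPair w (zigR 0 w.length p') (zigR 0 w.length p)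
      then false else true := by
  simp [psi, psiR]

theorem psi_append_append {A B C : List Bool} (hB : IsDyck B) (hAC : A.length = C.length) :
    psi (A ++ B ++ C) = psi (A ++ C) ++ psi B := by
  have hw : (A ++ B ++ C).length = 2 * A.length + B.length := by simp; omega
  have hv : (A ++ C).length = 2 * A.length := by simp; omega
  refine List.ext_getElem (by simp [length_psi]; omega) fun p hp _ => ?_
  rw [getElem_psi _ hp, hw]
  rcases lt_or_ge p (2 * A.length) with hpA | hpA
  · rw [List.getElem_append_left (by rwa [length_psi, hv]), getElem_psi, hv]
    refine if_congr (exists_congr fun p' => and_congr_right fun hp' => ?_) rfl rfl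
    rw [zigR_zero_two_mul_add_of_lt (hp'.trans hpA), zigR_zero_two_mul_add_of_lt hpA,
      matchPair_spliceIdx hB]
  obtain ⟨q, rfl⟩ : ∃ q, p = 2 * A.length + q := ⟨p - 2 * A.length, by omega⟩
  have hq : q < B.length := by rw [length_psi, hw] at hp; omega
  rw [List.getElem_append_right (by rw [length_psi, hv]; omega), getElem_psi]
  simp only [length_psi, hv, Nat.add_sub_cancel_left]
  refine if_congr ⟨?_, ?_⟩ rfl rfl
  · rintro ⟨p', hp', hm⟩
    rw [zigR_zero_two_mul_add_add hq] at hm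
    rcases lt_or_ge p' (2 * A.length) with hp'A | hp'A
    · rw [zigR_zero_two_mul_add_of_lt hp'A] at hm
      exact absurd hm (not_matchPair_spliceIdx_length_add hB (zigR_zero_lt hq))
    obtain ⟨q', rfl⟩ : ∃ q', p' = 2 * A.length + q' := ⟨p' - 2 * A.length, by omega⟩
    rw [zigR_zero_two_mul_add_add (by omega),
      matchPair_append_append_length_add (zigR_zero_lt (by omega)) (zigR_zero_lt hq)] at hm
    exact ⟨q', by omega, hm⟩
  · rintro ⟨q', hq', hm⟩
    refine ⟨2 * A.length + q', by omega, ?_⟩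
    rwa [zigR_zero_two_mul_add_add hq, zigR_zero_two_mul_add_add (hq'.trans hq),
      matchPair_append_append_length_add (zigR_zero_lt (hq'.trans hq)) (zigR_zero_lt hq)]

lemma isDyck_nil : IsDyck [] :=
  ⟨rfl, fun p hp => by simp [List.prefix_nil.mp hp]⟩

lemma psi_true_false : psi [true, false] = [true, false] := by
  have hm : MatchPair [true, false] (zigR 0 2 0) (zigR 0 2 1) :=
    Or.inl ⟨[], [], [], isDyck_nil, rfl, rfl, rfl⟩
  refine List.ext_getElem (length_psi _) fun p hp _ => ?_
  rw [getElem_psi _ hp]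
  have hp2 : p < 2 := by simpa [length_psi] using hp
  interval_cases p
  · simp
  · rw [if_pos ⟨0, Nat.zero_lt_one, hm⟩]; rfl

theorem psi_append_general (A B C : List Bool) (hB : IsDyck B)
    (hAC : A.length = C.length) :
    psi (A ++ B ++ C) = psi (A ++ C) ++ psi B ∧
      ∀ B' : List Bool, IsDyck B' →
        psi (true :: (B' ++ [false])) = true :: false :: psi B' :=
  ⟨psi_append_append hB hAC, fun B' hB' => by
    simpa [psi_true_false] using psi_append_append (A := [true]) (C := [false]) hB' rfl⟩

/-- if `D = ABC` is a Dyck word with `B` a Dyck word and `|A| = |C|`,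
then `Ψ(ABC) = Ψ(AC)·Ψ(B)`; in particular `Ψ(uBd) = ud·Ψ(B)` for any Dyck word `B`. -/
theorem psi_append (A B C : List Bool) (hABC : IsDyck (A ++ B ++ C)) (hB : IsDyck B)
    (hAC : A.length = C.length) :
    psi (A ++ B ++ C) = psi (A ++ C) ++ psi B ∧
      ∀ B' : List Bool, IsDyck B' →
        psi (true :: (B' ++ [false])) = true :: false :: psi B' :=
  psi_append_general A B C hB hAC

end DyckBij
end

section
/- For every Dyck word D, the number of centered tunnels of D equals the number of hills of Ψ(D): ct(D) = h(Ψ(D)). -/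
attribute [local instance] Classical.propDecidable

namespace DyckBij

/-!
Reading `D` in the zigzag order `σ` turns its matching of steps into a perfect matching of
reading times, and `Ψ(D)` is the word of that matching: its `p`-th letter is `u` exactly when
the partner of the `p`-th step read is read later. A prefix of such a word is a Dyck word iff the
times it covers are closed under the matching, so a hill of `Ψ(D)` at `i` is a pair of times
`i, i + 1` matched to each other, all earlier times being matched among themselves. At times
`2a, 2a + 1` the order `σ` reads the positions `a` and `2n - 1 - a`: such a hill is a centered
tunnel, and conversely a centered tunnel gives a hill there because matched pairs do not cross
(the times before `2a` read the positions outside `[a, 2n - 1 - a]`). At odd times `σ` reads two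
positions of even sum, which are never matched.

Matchings are handled through the height profile: `i` and `j` are matched iff `j + 1` is the
first return after `i` to the height before step `i`.
-/

def stepHeight : Bool → ℤ
  | true => 1
  | false => -1

def height (w : List Bool) (k : ℕ) : ℤ :=
  ((w.take k).count true : ℤ) - (w.take k).count false

section Height

variable {w : List Bool} {k m : ℕ}

@[simp]
lemma height_zero (w : List Bool) : height w 0 = 0 := by
  simp [height]

lemma height_succ (hk : k < w.length) : height w (k + 1) = height w k + stepHeight w[k] := by
  cases h : w[k] <;>
    simp [height, List.take_add_one, List.getElem?_eq_getElem hk, h, List.count_append,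
      stepHeight] <;> ring

lemma height_of_length_le (hk : w.length ≤ k) : height w k = height w w.length := by
  simp [height, List.take_of_length_le hk]

lemma height_succ_mem_Icc (w : List Bool) (k : ℕ) :
    height w (k + 1) ∈ Set.Icc (height w k - 1) (height w k + 1) := by
  rcases lt_or_ge k w.length with hk | hk
  · rw [height_succ hk]
    cases w[k] <;> simp only [stepHeight, Set.mem_Icc] <;> omega
  · rw [height_of_length_le hk, height_of_length_le (Nat.le_succ_of_le hk)]
    simp

lemma height_cons_succ (b : Bool) (w : List Bool) (k : ℕ) :
    height (b :: w) (k + 1) = stepHeight b + height w k := by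
  cases b <;> simp [height, stepHeight] <;> ring

lemma height_append_of_le {u v : List Bool} (hk : k ≤ u.length) :
    height (u ++ v) k = height u k := by
  simp [height, List.take_append_of_le_length hk]

lemma height_append_add (u v : List Bool) (t : ℕ) :
    height (u ++ v) (u.length + t) = height u u.length + height v t := by
  simp [height, List.take_append, List.count_append, List.take_of_length_le]
  ring

lemma height_take (w : List Bool) (k m : ℕ) : height (w.take m) k = height w (min k m) := by
  simp [height, List.take_take]

lemma height_drop (w : List Bool) (m t : ℕ) :
    height (w.drop m) t = height w (m + t) - height w m := by
  simp only [height, List.take_add, List.count_append, Nat.cast_add]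
  ring

lemma isDyck_iff_height : IsDyck w ↔ height w w.length = 0 ∧ ∀ k, 0 ≤ height w k := by
  have prefixes : (∀ p : List Bool, p <+: w → p.count false ≤ p.count true) ↔
      ∀ k, 0 ≤ height w k := by
    refine ⟨fun h k => ?_, fun h p hp => ?_⟩
    · have := h _ (w.take_prefix k)
      simp only [height]
      omega
    · have := h p.length
      rw [height, ← List.prefix_iff_eq_take.mp hp] at this
      omega
  rw [IsDyck, prefixes, height, List.take_of_length_le le_rfl]
  constructor <;> rintro ⟨h, h'⟩ <;> exact ⟨by omega, h'⟩

lemma IsDyck.even_length (hw : IsDyck w) : Even w.length := by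
  have := w.count_true_add_count_false
  have := hw.1
  exact ⟨w.count true, by omega⟩

lemma height_min_length (w : List Bool) (k : ℕ) : height w (min k w.length) = height w k := by
  rcases le_total k w.length with h | h
  · rw [min_eq_left h]
  · rw [min_eq_right h, height_of_length_le h]

lemma IsDyck.isDyck_take_iff (hw : IsDyck w) : IsDyck (w.take m) ↔ height w m = 0 := by
  have nonneg := (isDyck_iff_height.mp hw).2
  simp only [isDyck_iff_height, List.length_take, height_take, nonneg, implies_true, and_true]
  rw [min_eq_left (min_le_left _ _), height_min_length]

lemma IsDyck.isDyck_drop (hw : IsDyck w) (hm : height w m = 0) : IsDyck (w.drop m) := by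
  rw [isDyck_iff_height] at hw ⊢
  simp only [height_drop, hm, sub_zero, hw.2, implies_true, and_true, List.length_drop]
  rcases le_total m w.length with h | h
  · rw [Nat.add_sub_cancel' h, hw.1]
  · rw [height_of_length_le (by omega), hw.1]

end Height

section Matching

variable {w : List Bool} {i j k a b : ℕ}

lemma height_of_eq_append {A B C : List Bool} {x y : Bool}
    (hw : w = A ++ x :: (B ++ y :: C)) :
    (∀ t ≤ B.length,
        height w (A.length + 1 + t) = height w A.length + stepHeight x + height B t) ∧
      height w (A.length + B.length + 2) =
        height w A.length + stepHeight x + height B B.length + stepHeight y := by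
  have hA : height w A.length = height A A.length := by rw [hw, height_append_of_le le_rfl]
  subst hw
  refine ⟨fun t ht => ?_, ?_⟩
  · rw [show A.length + 1 + t = A.length + (t + 1) by ring, height_append_add, height_cons_succ,
      height_append_of_le ht, hA]
    ring
  · rw [show A.length + B.length + 2 = A.length + (B.length + 1 + 1) by ring, height_append_add,
      height_cons_succ, height_append_add, height_cons_succ, height_zero, hA]
    ring

lemma eq_append_getElem_cons (hij : i < j) (hj : j < w.length) :
    w = w.take i ++ w[i] :: ((w.drop (i + 1)).take (j - i - 1) ++ w[j] :: w.drop (j + 1)) := by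
  conv_lhs =>
    rw [← List.take_append_drop i w, List.drop_eq_getElem_cons (by omega),
      ← List.take_append_drop (j - i - 1) (w.drop (i + 1)), List.drop_drop,
      show i + 1 + (j - i - 1) = j by omega, List.drop_eq_getElem_cons hj]

lemma matched_iff_height : Matched w i j ↔ i < j ∧ j < w.length ∧
    height w (j + 1) = height w i ∧ ∀ k, i < k → k ≤ j → height w i < height w k := by
  constructor
  · rintro ⟨A, B, C, hB, hw, rfl, rfl⟩
    obtain ⟨inner, last⟩ := height_of_eq_append hw
    rw [isDyck_iff_height] at hB
    have hlen : w.length = A.length + B.length + C.length + 2 := by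
      simp only [hw, List.length_append, List.length_cons]
      omega
    refine ⟨by omega, by omega, ?_, fun k hik hkj => ?_⟩
    · rw [show A.length + B.length + 1 + 1 = A.length + B.length + 2 by ring, last, hB.1]
      simp [stepHeight]
    · obtain ⟨t, rfl⟩ : ∃ t, k = A.length + 1 + t := ⟨k - A.length - 1, by omega⟩
      rw [inner t (by omega)]
      have := hB.2 t
      simp only [stepHeight]
      omega
  · rintro ⟨hij, hj, hret, hpos⟩
    have hw := eq_append_getElem_cons hij hj
    set B := (w.drop (i + 1)).take (j - i - 1)
    have hBlen : B.length = j - i - 1 := by simp only [B, List.length_take, List.length_drop]; omega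
    have hAlen : (w.take i).length = i := by simp only [List.length_take]; omega
    obtain ⟨inner, last⟩ := height_of_eq_append hw
    simp only [hAlen, hBlen] at inner last
    have hup : w[i] = true := by
      have := hpos (i + 1) (by omega) (by omega)
      rw [inner 0 (by omega)] at this
      revert this; cases w[i] <;> simp [stepHeight]
    have hBnonneg : ∀ t, 0 ≤ height B t := by
      intro t
      rw [← height_min_length]
      rcases Nat.eq_zero_or_pos (min t B.length) with h0 | hpos'
      · rw [h0, height_zero]
      · have := hpos (i + 1 + min t B.length) (by omega) (by omega)
        rw [inner _ (by omega), hup] at this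
        simp only [stepHeight] at this
        omega
    have hdown : w[j] = false ∧ height B B.length = 0 := by
      rw [show i + (j - i - 1) + 2 = j + 1 by omega, hret, hup, ← hBlen] at last
      have := hBnonneg B.length
      cases h : w[j] <;> simp only [h, stepHeight] at last
      · exact ⟨rfl, by omega⟩
      · omega
    rw [hup, hdown.1] at hw
    exact ⟨_, B, _, isDyck_iff_height.mpr ⟨hdown.2, hBnonneg⟩, hw, hAlen, by omega⟩

lemma Matched.lt (h : Matched w i j) : i < j :=
  (matched_iff_height.mp h).1

lemma Matched.lt_length (h : Matched w i j) : j < w.length :=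
  (matched_iff_height.mp h).2.1

lemma Matched.odd_add (h : Matched w i j) : Odd (i + j) := by
  obtain ⟨A, B, C, hB, -, rfl, rfl⟩ := h
  obtain ⟨r, hr⟩ := hB.even_length
  exact ⟨A.length + r, by omega⟩

lemma Matched.height_le (h : Matched w a b) (hak : a ≤ k) (hkb : k ≤ b + 1) :
    height w a ≤ height w k := by
  obtain ⟨-, -, hret, hpos⟩ := matched_iff_height.mp h
  rcases hak.eq_or_lt with rfl | hak
  · rfl
  rcases hkb.lt_or_eq with hkb | rfl
  · exact (hpos k hak (by omega)).le
  · exact hret.ge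

lemma Matched.right_unique (h : Matched w i j) (h' : Matched w i k) : j = k := by
  obtain ⟨hij, -, hret, hpos⟩ := matched_iff_height.mp h
  obtain ⟨hik, -, hret', hpos'⟩ := matched_iff_height.mp h'
  by_contra hne
  rcases Nat.lt_or_gt_of_ne hne with hjk | hkj
  · exact (hpos' (j + 1) (by omega) hjk).ne' hret
  · exact (hpos (k + 1) (by omega) hkj).ne' hret'

lemma Matched.left_unique (h : Matched w i k) (h' : Matched w j k) : i = j := by
  obtain ⟨hik, -, hret, hpos⟩ := matched_iff_height.mp h
  obtain ⟨hjk, -, hret', hpos'⟩ := matched_iff_height.mp h'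
  by_contra hne
  rcases Nat.lt_or_gt_of_ne hne with hij | hji
  · exact (hpos j hij hjk.le).ne' (hret'.symm.trans hret)
  · exact (hpos' i hji hik.le).ne' (hret.symm.trans hret')

lemma Matched.not_matched (h : Matched w i j) : ¬ Matched w j k := by
  intro h'
  obtain ⟨hij, -, hret, hpos⟩ := matched_iff_height.mp h
  obtain ⟨hjk, -, -, hpos'⟩ := matched_iff_height.mp h'
  have := hpos j hij le_rfl
  have := hpos' (j + 1) (by omega) hjk
  omega

lemma MatchPair.symm (h : MatchPair w i j) : MatchPair w j i :=
  Or.symm h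

lemma MatchPair.ne (h : MatchPair w i j) : i ≠ j := by
  rcases h with h | h
  · exact h.lt.ne
  · exact h.lt.ne'

lemma MatchPair.lt_length (h : MatchPair w k j) (hk : k < w.length) : j < w.length := by
  rcases h with h | h
  · exact h.lt_length
  · exact h.lt.trans hk

lemma MatchPair.unique (h : MatchPair w k i) (h' : MatchPair w k j) : i = j := by
  rcases h with h | h <;> rcases h' with h' | h'
  · exact h.right_unique h'
  · exact (h'.not_matched h).elim
  · exact (h.not_matched h').elim
  · exact h.left_unique h'

lemma MatchPair.odd_add (h : MatchPair w i j) : Odd (i + j) := by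
  rcases h with h | h
  · exact h.odd_add
  · exact add_comm i j ▸ h.odd_add

/-- Matched pairs do not cross. -/
lemma Matched.not_mem_Icc_of_matchPair (hab : Matched w a b) (hkj : MatchPair w k j)
    (hk : k ∉ Set.Icc a b) : j ∉ Set.Icc a b := by
  rintro ⟨haj, hjb⟩
  simp only [Set.mem_Icc, not_and_or, not_le] at hk
  rcases hkj with hkj | hjk
  · have hka : k < a := by have := hkj.lt; omega
    obtain ⟨-, -, hret, hpos⟩ := matched_iff_height.mp hkj
    have := hpos a hka haj
    have := hab.height_le (k := j + 1) (by omega) (by omega)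
    omega
  · have hbk : b < k := by have := hjk.lt; omega
    obtain ⟨-, -, -, hpos⟩ := matched_iff_height.mp hjk
    obtain ⟨-, -, hret, -⟩ := matched_iff_height.mp hab
    have := hpos (b + 1) (by omega) hbk
    have := hab.height_le haj (by omega)
    omega

end Matching

section Partner

variable {w : List Bool} {j k : ℕ}

lemma IsDyck.exists_matched_of_up (hw : IsDyck w) (hk : k < w.length) (hup : w[k] = true) :
    ∃ j, Matched w k j := by
  obtain ⟨hend, hnonneg⟩ := isDyck_iff_height.mp hw
  have hex : ∃ m, k < m ∧ height w m ≤ height w k := ⟨w.length, hk, hend ▸ hnonneg k⟩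
  obtain ⟨hkm, hret⟩ := Nat.find_spec hex
  have hmL : Nat.find hex ≤ w.length := Nat.find_min' hex ⟨hk, hend ▸ hnonneg k⟩
  have hpos : ∀ m, k < m → m < Nat.find hex → height w k < height w m := fun m hkm hm =>
    not_le.mp fun hle => Nat.find_min hex hm ⟨hkm, hle⟩
  have hstep : height w (k + 1) = height w k + 1 := by rw [height_succ hk, hup]; rfl
  have hk1 : k + 1 < Nat.find hex := by
    by_contra h
    rw [show Nat.find hex = k + 1 by omega, hstep] at hret
    omega
  refine ⟨Nat.find hex - 1, matched_iff_height.mpr ⟨by omega, by omega, ?_,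
    fun m hkm hm => hpos m hkm (by omega)⟩⟩
  have hlast := hpos (Nat.find hex - 1) (by omega) (by omega)
  obtain ⟨hstep_ge, -⟩ := height_succ_mem_Icc w (Nat.find hex - 1)
  rw [Nat.sub_add_cancel (by omega)] at hstep_ge ⊢
  omega

lemma IsDyck.exists_matched_of_down (hw : IsDyck w) (hk : k < w.length)
    (hdown : w[k] = false) : ∃ i, Matched w i k := by
  obtain ⟨-, hnonneg⟩ := isDyck_iff_height.mp hw
  have hstep : height w (k + 1) = height w k - 1 := by
    rw [height_succ hk, hdown]; rfl
  set i := Nat.findGreatest (fun m => height w m ≤ height w (k + 1)) k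
  have hi : height w i ≤ height w (k + 1) :=
    Nat.findGreatest_spec (P := fun m => height w m ≤ height w (k + 1)) (Nat.zero_le k)
      (by rw [height_zero]; exact hnonneg _)
  have hpos : ∀ m, i < m → m ≤ k → height w (k + 1) < height w m := fun m him hmk =>
    not_le.mp (Nat.findGreatest_is_greatest him hmk)
  have hik : i < k := by
    by_contra h
    rw [show i = k from le_antisymm (Nat.findGreatest_le k) (not_lt.mp h)] at hi
    omega
  refine ⟨i, matched_iff_height.mpr ⟨hik, hk, ?_, fun m him hmk => ?_⟩⟩
  · have := hpos (i + 1) (by omega) hik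
    obtain ⟨-, hstep_le⟩ := height_succ_mem_Icc w i
    omega
  · have := hpos (i + 1) (by omega) hik
    obtain ⟨-, hstep_le⟩ := height_succ_mem_Icc w i
    have := hpos m him hmk
    omega

lemma IsDyck.exists_matchPair (hw : IsDyck w) (hk : k < w.length) : ∃ j, MatchPair w k j := by
  cases h : w[k]
  · obtain ⟨i, hi⟩ := hw.exists_matched_of_down hk h
    exact ⟨i, Or.inr hi⟩
  · obtain ⟨j, hj⟩ := hw.exists_matched_of_up hk h
    exact ⟨j, Or.inl hj⟩

/-- A junk value unless `k` is a step of a Dyck word `w`. -/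
noncomputable def partner (w : List Bool) (k : ℕ) : ℕ :=
  Classical.epsilon (MatchPair w k)

lemma IsDyck.matchPair_partner (hw : IsDyck w) (hk : k < w.length) :
    MatchPair w k (partner w k) :=
  Classical.epsilon_spec (hw.exists_matchPair hk)

lemma MatchPair.partner_eq (h : MatchPair w k j) : partner w k = j :=
  (Classical.epsilon_spec ⟨j, h⟩).unique h

end Partner

structure IsPerfectMatching (L : ℕ) (f : ℕ → ℕ) : Prop where
  lt : ∀ p < L, f p < L
  apply_apply : ∀ p < L, f (f p) = p
  ne : ∀ p < L, f p ≠ p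

namespace IsPerfectMatching

variable {L : ℕ} {f : ℕ → ℕ}

lemma conj (hf : IsPerfectMatching L f) {g g' : ℕ → ℕ} (hg : ∀ p < L, g p < L)
    (hg' : ∀ p < L, g' p < L) (hgg' : ∀ p < L, g (g' p) = p) (hg'g : ∀ p < L, g' (g p) = p) :
    IsPerfectMatching L (g' ∘ f ∘ g) where
  lt p hp := hg' _ (hf.lt _ (hg p hp))
  apply_apply p hp := by
    simp only [Function.comp_apply]
    rw [hgg' _ (hf.lt _ (hg p hp)), hf.apply_apply _ (hg p hp), hg'g p hp]
  ne p hp h := by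
    have := congrArg g h
    simp only [Function.comp_apply] at this
    exact hf.ne _ (hg p hp) (by rwa [hgg' _ (hf.lt _ (hg p hp))] at this)

lemma injOn (hf : IsPerfectMatching L f) : Set.InjOn f (Set.Iio L) := fun p hp q hq h => by
  rw [← hf.apply_apply p hp, h, hf.apply_apply q hq]

end IsPerfectMatching

lemma IsDyck.isPerfectMatching_partner {w : List Bool} (hw : IsDyck w) :
    IsPerfectMatching w.length (partner w) where
  lt _ hp := (hw.matchPair_partner hp).lt_length hp
  apply_apply _ hp := (hw.matchPair_partner hp).symm.partner_eq
  ne _ hp := (hw.matchPair_partner hp).ne.symm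

def matchingWord (L : ℕ) (f : ℕ → ℕ) : List Bool :=
  List.ofFn fun p : Fin L => decide ((p : ℕ) < f p)

section MatchingWord

variable {L m p : ℕ} {f : ℕ → ℕ}

@[simp]
lemma length_matchingWord : (matchingWord L f).length = L :=
  List.length_ofFn

@[simp]
lemma getElem_matchingWord (hp : p < (matchingWord L f).length) :
    (matchingWord L f)[p] = decide (p < f p) := by
  simp [matchingWord]

open Finset in
lemma height_matchingWord (hm : m ≤ L) :
    height (matchingWord L f) m = #{p ∈ range m | p < f p} - #{p ∈ range m | ¬ p < f p} := by
  induction m with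
  | zero => simp
  | succ m ih =>
    rw [height_succ (by simpa using hm), ih (by omega), getElem_matchingWord, range_add_one,
      filter_insert, filter_insert]
    by_cases h : m < f m <;> simp [h, stepHeight] <;> ring

end MatchingWord

namespace IsPerfectMatching

open Finset

variable {L m : ℕ} {f : ℕ → ℕ}

lemma card_down_le (hf : IsPerfectMatching L f) (hm : m ≤ L) :
    #{p ∈ range m | ¬ p < f p} ≤ #{p ∈ range m | p < f p} := by
  refine card_le_card_of_injOn f (fun p hp => ?_) (hf.injOn.mono fun p hp => ?_)
  all_goals simp only [mem_coe, mem_filter, mem_range, Set.mem_Iio] at hp ⊢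
  · have := hf.ne p (by omega)
    rw [hf.apply_apply p (by omega)]
    omega
  · omega

lemma card_down_eq_iff (hf : IsPerfectMatching L f) (hm : m ≤ L) :
    #{p ∈ range m | ¬ p < f p} = #{p ∈ range m | p < f p} ↔ ∀ p < m, f p < m := by
  refine ⟨fun heq p hp => ?_, fun hclosed => (hf.card_down_le hm).antisymm ?_⟩
  · by_contra hfp
    have hup : p ∈ {p ∈ range m | p < f p} := by simp only [mem_filter, mem_range]; omega
    have : #{p ∈ range m | ¬ p < f p} ≤ #({p ∈ range m | p < f p}.erase p) := by
      refine card_le_card_of_injOn f (fun q hq => ?_) (hf.injOn.mono fun q hq => ?_)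
      all_goals simp only [mem_coe, mem_filter, mem_erase, mem_range, Set.mem_Iio] at hq ⊢
      · have := hf.ne q (by omega)
        have hinv := hf.apply_apply q (by omega)
        refine ⟨fun hqp => ?_, by omega, by omega⟩
        rw [hqp] at hinv
        omega
      · omega
    rw [card_erase_of_mem hup] at this
    have := card_pos.mpr ⟨p, hup⟩
    omega
  · refine card_le_card_of_injOn f (fun p hp => ?_) (hf.injOn.mono fun p hp => ?_)
    all_goals simp only [mem_coe, mem_filter, mem_range, Set.mem_Iio] at hp ⊢
    · rw [hf.apply_apply p (by omega)]
      exact ⟨hclosed p hp.1, by omega⟩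
    · omega

lemma height_matchingWord_nonneg (hf : IsPerfectMatching L f) (m : ℕ) :
    0 ≤ height (matchingWord L f) m := by
  rw [← height_min_length, length_matchingWord, height_matchingWord (min_le_right _ _)]
  have := hf.card_down_le (min_le_right m L)
  omega

lemma height_matchingWord_eq_zero_iff (hf : IsPerfectMatching L f) (hm : m ≤ L) :
    height (matchingWord L f) m = 0 ↔ ∀ p < m, f p < m := by
  rw [height_matchingWord hm, ← hf.card_down_eq_iff hm]
  omega

lemma isDyck_matchingWord (hf : IsPerfectMatching L f) : IsDyck (matchingWord L f) := by
  rw [isDyck_iff_height, length_matchingWord, hf.height_matchingWord_eq_zero_iff le_rfl]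
  exact ⟨hf.lt, hf.height_matchingWord_nonneg⟩

end IsPerfectMatching

def IsHill (w : List Bool) (i : ℕ) : Prop :=
  ∃ X Y : List Bool, IsDyck X ∧ IsDyck Y ∧ w = X ++ true :: false :: Y ∧ X.length = i

lemma IsDyck.isHill_iff {w : List Bool} {i : ℕ} (hw : IsDyck w) :
    IsHill w i ↔ height w i = 0 ∧ w[i]? = some true ∧ w[i + 1]? = some false := by
  constructor
  · rintro ⟨X, Y, hX, -, rfl, rfl⟩
    refine ⟨?_, by simp, by simp⟩
    rw [height_append_of_le le_rfl]
    exact (isDyck_iff_height.mp hX).1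
  · rintro ⟨h0, hi, hi1⟩
    obtain ⟨hi1L, hi1⟩ := List.getElem?_eq_some_iff.mp hi1
    obtain ⟨hiL, hi⟩ := List.getElem?_eq_some_iff.mp hi
    have h2 : height w (i + 2) = 0 := by
      rw [height_succ hi1L, height_succ hiL, hi, hi1, h0]
      rfl
    refine ⟨w.take i, w.drop (i + 2), hw.isDyck_take_iff.mpr h0, hw.isDyck_drop h2, ?_,
      by simp only [List.length_take]; omega⟩
    conv_lhs => rw [← List.take_append_drop i w, List.drop_eq_getElem_cons hiL,
      List.drop_eq_getElem_cons hi1L, hi, hi1]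

lemma IsPerfectMatching.isHill_matchingWord_iff {L i : ℕ} {f : ℕ → ℕ}
    (hf : IsPerfectMatching L f) :
    IsHill (matchingWord L f) i ↔ i < L ∧ f i = i + 1 ∧ ∀ p < i, f p < i := by
  rw [hf.isDyck_matchingWord.isHill_iff, List.getElem?_eq_some_iff, List.getElem?_eq_some_iff]
  simp only [length_matchingWord, getElem_matchingWord, decide_eq_true_eq, decide_eq_false_iff_not,
    not_lt]
  constructor
  · rintro ⟨h0, ⟨hiL, hup⟩, ⟨hi1L, hdown⟩⟩
    have hclosed := (hf.height_matchingWord_eq_zero_iff (by omega)).mp h0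
    have hne := hf.ne (i + 1) hi1L
    have : f (i + 1) = i := by
      by_contra h
      have := hf.apply_apply (i + 1) hi1L
      have := hclosed (f (i + 1)) (by omega)
      omega
    refine ⟨hiL, ?_, hclosed⟩
    rw [← this, hf.apply_apply _ hi1L, this]
  · rintro ⟨hiL, hfi, hclosed⟩
    have hi1L : i + 1 < L := hfi ▸ hf.lt i hiL
    refine ⟨(hf.height_matchingWord_eq_zero_iff hiL.le).mpr hclosed, ⟨hiL, by omega⟩, hi1L,
      ?_⟩
    rw [← hfi, hf.apply_apply i hiL, hfi]
    omega

section Zigzag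

variable {L p k a : ℕ}

@[simp]
lemma zigR_zero_two_mul (L c : ℕ) : zigR 0 L (2 * c) = c := by
  simp [zigR]

@[simp]
lemma zigR_zero_two_mul_add_one (L c : ℕ) : zigR 0 L (2 * c + 1) = L - 1 - c := by
  simp [zigR]
  omega

lemma zigR_zero_lt_s2 (hp : p < L) : zigR 0 L p < L := by
  obtain ⟨c, rfl | rfl⟩ := Nat.even_or_odd' p <;>
    simp only [zigR_zero_two_mul, zigR_zero_two_mul_add_one] <;> omega

/-- The time at which the zigzag order `σ = zigR 0 L` reads position `k`. -/
def unzig (L k : ℕ) : ℕ :=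
  if 2 * k < L then 2 * k else 2 * (L - 1 - k) + 1

lemma unzig_lt (hk : k < L) : unzig L k < L := by
  unfold unzig
  split <;> omega

lemma zigR_zero_unzig (hk : k < L) : zigR 0 L (unzig L k) = k := by
  unfold unzig
  split
  · exact zigR_zero_two_mul L k
  · rw [zigR_zero_two_mul_add_one]
    omega

lemma unzig_zigR_zero (hp : p < L) : unzig L (zigR 0 L p) = p := by
  obtain ⟨c, rfl | rfl⟩ := Nat.even_or_odd' p <;>
    simp only [zigR_zero_two_mul, zigR_zero_two_mul_add_one, unzig] <;> split <;> omega

lemma zigR_zero_mem_Icc_iff (hp : p < L) :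
    zigR 0 L p ∈ Set.Icc a (L - 1 - a) ↔ 2 * a ≤ p := by
  obtain ⟨c, rfl | rfl⟩ := Nat.even_or_odd' p <;>
    simp only [zigR_zero_two_mul, zigR_zero_two_mul_add_one, Set.mem_Icc] <;> omega

end Zigzag

noncomputable def psiMatching (D : List Bool) : ℕ → ℕ :=
  unzig D.length ∘ partner D ∘ zigR 0 D.length

section Psi

variable {D : List Bool} {i p q : ℕ}

lemma IsDyck.isPerfectMatching_psiMatching (hD : IsDyck D) :
    IsPerfectMatching D.length (psiMatching D) :=
  hD.isPerfectMatching_partner.conj (fun _ => zigR_zero_lt_s2) (fun _ => unzig_lt)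
    (fun _ => zigR_zero_unzig) (fun _ => unzig_zigR_zero)

lemma IsDyck.matchPair_zigR_zero_iff (hD : IsDyck D) (hp : p < D.length) (hq : q < D.length) :
    MatchPair D (zigR 0 D.length p) (zigR 0 D.length q) ↔ psiMatching D p = q := by
  constructor
  · intro h
    rw [psiMatching, Function.comp_apply, Function.comp_apply, h.partner_eq, unzig_zigR_zero hq]
  · rintro rfl
    rw [psiMatching, Function.comp_apply, Function.comp_apply,
      zigR_zero_unzig ((hD.matchPair_partner (zigR_zero_lt_s2 hp)).lt_length (zigR_zero_lt_s2 hp))]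
    exact hD.matchPair_partner (zigR_zero_lt_s2 hp)

lemma IsDyck.psi_eq_matchingWord (hD : IsDyck D) :
    psi D = matchingWord D.length (psiMatching D) := by
  refine List.ext_getElem (by simp [psi, psiR]) fun p hp _ => ?_
  have hpL : p < D.length := by simpa [psi, psiR] using hp
  have hf := hD.isPerfectMatching_psiMatching
  have hread : (∃ p' < p, MatchPair D (zigR 0 D.length p') (zigR 0 D.length p)) ↔
      psiMatching D p < p := by
    constructor
    · rintro ⟨p', hp', h⟩
      rwa [(hD.matchPair_zigR_zero_iff hpL (hp'.trans hpL)).mp h.symm]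
    · intro h
      exact ⟨_, h, ((hD.matchPair_zigR_zero_iff hpL (hf.lt p hpL)).mpr rfl).symm⟩
  have := hf.ne p hpL
  simp only [psi, psiR, List.getElem_ofFn, getElem_matchingWord, hread]
  split <;> simp <;> omega

lemma IsDyck.isHill_psi_iff (hD : IsDyck D) :
    IsHill (psi D) i ↔ ∃ a, Matched D a (D.length - 1 - a) ∧ 2 * a = i := by
  have hf := hD.isPerfectMatching_psiMatching
  rw [hD.psi_eq_matchingWord, hf.isHill_matchingWord_iff]
  constructor
  · rintro ⟨hiL, hfi, -⟩
    have hi1L : i + 1 < D.length := hfi ▸ hf.lt i hiL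
    have hpair := (hD.matchPair_zigR_zero_iff hiL hi1L).mpr hfi
    obtain ⟨a, rfl | rfl⟩ := Nat.even_or_odd' i
    · rw [zigR_zero_two_mul, zigR_zero_two_mul_add_one] at hpair
      exact ⟨a, hpair.resolve_right fun h => by have := h.lt; omega, rfl⟩
    · -- a matched pair has odd sum of positions, but these two positions sum to `|D|`
      rw [zigR_zero_two_mul_add_one, show 2 * a + 1 + 1 = 2 * (a + 1) by ring,
        zigR_zero_two_mul] at hpair
      have hodd := hpair.odd_add
      rw [show D.length - 1 - a + (a + 1) = D.length by omega] at hodd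
      exact absurd hD.even_length (Nat.not_even_iff_odd.mpr hodd)
  · rintro ⟨a, hmatch, rfl⟩
    have := hmatch.lt
    have := hmatch.lt_length
    have h2aL : 2 * a + 1 < D.length := by omega
    refine ⟨by omega, (hD.matchPair_zigR_zero_iff (by omega) h2aL).mp ?_, fun p hp => ?_⟩
    · rw [zigR_zero_two_mul, zigR_zero_two_mul_add_one]
      exact Or.inl hmatch
    · by_contra hge
      have hpL : p < D.length := by omega
      have hpair := (hD.matchPair_zigR_zero_iff hpL (hf.lt p hpL)).mpr rfl
      refine hmatch.not_mem_Icc_of_matchPair hpair ?_ ?_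
      · rw [zigR_zero_mem_Icc_iff hpL]
        omega
      · rw [zigR_zero_mem_Icc_iff (hf.lt p hpL)]
        omega

end Psi

lemma ctun_eq_ncard (w : List Bool) : ctun w = {a | Matched w a (w.length - 1 - a)}.ncard := by
  rw [ctun, tunEq]
  congr 1
  ext a
  simp only [Set.mem_ofPred_eq, Matched]
  refine exists_congr fun A => exists_congr fun B => exists_congr fun C =>
    and_congr_right fun _ => and_congr_right fun hw => and_congr_right fun _ => ?_
  have hlen : w.length = A.length + B.length + C.length + 2 := by
    simp only [hw, List.length_append, List.length_cons]
    omega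
  constructor <;> intro <;> omega

/-- for every Dyck word `D`, `ct(D) = h(Ψ(D))`. -/
theorem ctun_eq_numHills_psi (D : List Bool) (hD : IsDyck D) :
    ctun D = numHills (psi D) := by
  have hills : {i | IsHill (psi D) i} = (2 * ·) '' {a | Matched D a (D.length - 1 - a)} := by
    ext i
    simp only [Set.mem_ofPred_eq, Set.mem_image, hD.isHill_psi_iff]
  change _ = {i | IsHill (psi D) i}.ncard
  rw [ctun_eq_ncard, hills, Set.ncard_image_of_injective _ (mul_right_injective₀ two_ne_zero)]

end DyckBij
end
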